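/- arXiv:2602.03440 — 2 statements merged into one kernel-verified Lean document; each statement's English description precedes it below -/
import Mathlib

section
/- For every integer n ≥ 1 and every rational (or complex) number x, ∑_{j=1}^{n} (C(n,j) - 1) · (B_j/j) · x^{n-j} = ∑_{k=1}^{n} {n k} · C(x,k) · k! · H_k − H_n · x^n, where C(x,k) = x(x-1)···(x-k+1)/k! is the generalized binomial coefficient. -/
/-- Stirling numbers of the second kind. -/
def stirling2 : ℕ → ℕ → ℕ
  | 0, 0 => 1
  | 0, _ + 1 => 0
  | _ + 1, 0 => 0
  | n + 1, k + 1 => (k + 1) * stirling2 n (k + 1) + stirling2 n k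

/-- The generalized binomial coefficient C(x,k) = x(x-1)⋯(x-k+1)/k!. -/
def genChoose (x : ℚ) (k : ℕ) : ℚ :=
  (∏ i ∈ Finset.range k, (x - (i : ℚ))) / (k.factorial : ℚ)

open Finset

private def ff (x : ℚ) (k : ℕ) : ℚ := ∏ i ∈ range k, (x - (i : ℚ))

lemma ff_zero (x : ℚ) : ff x 0 = 1 := by simp [ff]

lemma ff_succ (x : ℚ) (k : ℕ) : ff x (k + 1) = ff x k * (x - k) := by
  simp [ff, prod_range_succ]

lemma ff_succ' (x : ℚ) (k : ℕ) : ff (x + 1) (k + 1) = (x + 1) * ff x k := by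
  unfold ff
  rw [prod_range_succ']
  simp only [Nat.cast_zero, sub_zero, Nat.cast_add, Nat.cast_one]
  rw [mul_comm]
  congr 1
  exact prod_congr rfl fun i _ => by ring

lemma genChoose_mul_fact (x : ℚ) (k : ℕ) : genChoose x k * (k.factorial : ℚ) = ff x k := by
  rw [genChoose, div_mul_cancel₀]
  · rfl
  · exact_mod_cast k.factorial_ne_zero

lemma stirling2_of_lt : ∀ (n k : ℕ), n < k → stirling2 n k = 0
  | 0, _ + 1, _ => rfl
  | n + 1, k + 1, h => by
    have h1 : n < k + 1 := by omega
    have h2 : n < k := by omega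
    simp [stirling2, stirling2_of_lt n (k + 1) h1, stirling2_of_lt n k h2]

lemma pow_eq_sum_stirling (n : ℕ) (x : ℚ) :
    x ^ n = ∑ k ∈ range (n + 1), (stirling2 n k : ℚ) * ff x k := by
  induction n with
  | zero => simp [stirling2, ff_zero]
  | succ n ih =>
    have h0 : ∑ k ∈ range (n + 2), (stirling2 (n + 1) k : ℚ) * ff x k
        = ∑ k ∈ range (n + 1), (stirling2 (n + 1) (k + 1) : ℚ) * ff x (k + 1) := by
      rw [sum_range_succ']
      simp [stirling2]
    have h1 : ∀ k ∈ range (n + 1), (stirling2 (n + 1) (k + 1) : ℚ) * ff x (k + 1)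
        = ((k : ℚ) + 1) * (stirling2 n (k + 1) : ℚ) * ff x (k + 1)
          + (stirling2 n k : ℚ) * ff x (k + 1) := by
      intro k _
      show ((((k + 1) * stirling2 n (k + 1) + stirling2 n k : ℕ) : ℚ)) * ff x (k + 1) = _
      push_cast
      ring
    have h2 : ∑ k ∈ range (n + 1), ((k : ℚ) + 1) * (stirling2 n (k + 1) : ℚ) * ff x (k + 1)
        = ∑ k ∈ range (n + 1), (k : ℚ) * (stirling2 n k : ℚ) * ff x k := by
      have e1 := sum_range_succ' (fun k => (k : ℚ) * (stirling2 n k : ℚ) * ff x k) (n + 1)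
      have e2 := sum_range_succ (fun k => (k : ℚ) * (stirling2 n k : ℚ) * ff x k) (n + 1)
      simp only [Nat.cast_zero, zero_mul, add_zero, stirling2_of_lt n (n + 1) (by omega),
        Nat.cast_zero, mul_zero, zero_mul] at e1 e2
      rw [e2] at e1
      calc ∑ k ∈ range (n + 1), ((k : ℚ) + 1) * (stirling2 n (k + 1) : ℚ) * ff x (k + 1)
          = ∑ k ∈ range (n + 1), (((k + 1 : ℕ)) : ℚ) * (stirling2 n (k + 1) : ℚ) * ff x (k + 1) :=
            sum_congr rfl fun k _ => by push_cast; ring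
        _ = ∑ k ∈ range (n + 1), (k : ℚ) * (stirling2 n k : ℚ) * ff x k := e1.symm
    rw [h0, sum_congr rfl h1, sum_add_distrib, h2, ← sum_add_distrib]
    have h3 : ∀ k ∈ range (n + 1), (k : ℚ) * (stirling2 n k : ℚ) * ff x k
        + (stirling2 n k : ℚ) * ff x (k + 1) = x * ((stirling2 n k : ℚ) * ff x k) := by
      intro k _
      rw [ff_succ]
      ring
    rw [sum_congr rfl h3, ← mul_sum, ← ih, ← pow_succ']

lemma hockey (k : ℕ) : ∀ N : ℕ, ((k : ℚ) + 1) * ∑ t ∈ range N, ff (t : ℚ) k = ff (N : ℚ) (k + 1) := by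
  intro N
  induction N with
  | zero =>
    simp only [range_zero, sum_empty, mul_zero, Nat.cast_zero]
    refine (prod_eq_zero (i := 0) (mem_range.mpr (Nat.succ_pos k)) ?_).symm
    simp
  | succ N ih =>
    rw [sum_range_succ, mul_add, ih]
    have : ((N + 1 : ℕ) : ℚ) = (N : ℚ) + 1 := by push_cast; ring
    rw [this, ff_succ', ff_succ]
    ring

lemma key_nat (n N : ℕ) :
    ∑ k ∈ range (n + 1), (stirling2 n k : ℚ) / ((k : ℚ) + 1) * ff (N : ℚ) (k + 1)
      = ∑ i ∈ range (n + 1), _root_.bernoulli i * ((n + 1).choose i) * (N : ℚ) ^ (n + 1 - i) / (n + 1) := by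
  have h1 : ∀ k ∈ range (n + 1), (stirling2 n k : ℚ) / ((k : ℚ) + 1) * ff (N : ℚ) (k + 1)
      = ∑ t ∈ range N, (stirling2 n k : ℚ) * ff (t : ℚ) k := by
    intro k _
    rw [← hockey k N, mul_sum]
    have hk : ((k : ℚ) + 1) ≠ 0 := by positivity
    field_simp
    rw [mul_sum, mul_sum]
    exact sum_congr rfl fun t _ => by ring
  rw [sum_congr rfl h1, sum_comm]
  have h2 : ∀ t ∈ range N, ∑ k ∈ range (n + 1), (stirling2 n k : ℚ) * ff (t : ℚ) k
      = (t : ℚ) ^ n := fun t _ => (pow_eq_sum_stirling n t).symm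
  rw [sum_congr rfl h2, sum_range_pow]

open Polynomial in
lemma key (n : ℕ) (x : ℚ) :
    ∑ k ∈ range (n + 1), (stirling2 n k : ℚ) / ((k : ℚ) + 1) * ff x (k + 1)
      = ∑ i ∈ range (n + 1), _root_.bernoulli i * ((n + 1).choose i) * x ^ (n + 1 - i) / (n + 1) := by
  set Pl : ℚ[X] := ∑ k ∈ range (n + 1),
    C ((stirling2 n k : ℚ) / ((k : ℚ) + 1)) * ∏ i ∈ range (k + 1), (X - C (i : ℚ)) with hPl
  set Pr : ℚ[X] := ∑ i ∈ range (n + 1),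
    C (_root_.bernoulli i * ((n + 1).choose i) / (n + 1)) * X ^ (n + 1 - i) with hPr
  have hevl : ∀ y : ℚ, Pl.eval y
      = ∑ k ∈ range (n + 1), (stirling2 n k : ℚ) / ((k : ℚ) + 1) * ff y (k + 1) := by
    intro y
    rw [hPl, eval_finset_sum]
    exact sum_congr rfl fun k _ => by simp [ff, eval_prod]
  have hevr : ∀ y : ℚ, Pr.eval y
      = ∑ i ∈ range (n + 1), _root_.bernoulli i * ((n + 1).choose i) * y ^ (n + 1 - i) / (n + 1) := by
    intro y
    rw [hPr, eval_finset_sum]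
    exact sum_congr rfl fun i _ => by simp; ring
  have heq : Pl = Pr := by
    apply eq_of_infinite_eval_eq
    apply Set.Infinite.mono (s := Set.range ((↑) : ℕ → ℚ))
    · rintro _ ⟨N, rfl⟩
      show Pl.eval _ = Pr.eval _
      rw [hevl, hevr, key_nat]
    · exact Set.infinite_range_of_injective Nat.cast_injective
  rw [← hevl, ← hevr, heq]

lemma main_aux (x : ℚ) : ∀ n : ℕ, 1 ≤ n →
    ∑ j ∈ range (n + 1), ((n.choose j : ℚ) - 1) * (_root_.bernoulli j / (j : ℚ)) * x ^ (n - j)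
      = ∑ k ∈ range (n + 1), (stirling2 n k : ℚ) * ff x k * harmonic k
        - harmonic n * x ^ n := by
  refine Nat.le_induction ?_ ?_
  · norm_num [sum_range_succ, stirling2, harmonic, ff_succ, ff_zero]
  · intro n hn ih
    -- RHS recurrence
    have peel0 : (stirling2 (n + 1) 0 : ℚ) * ff x 0 * harmonic 0 = 0 := by
      simp [harmonic]
    have expand : ∀ k ∈ range (n + 1),
        (stirling2 (n + 1) (k + 1) : ℚ) * ff x (k + 1) * harmonic (k + 1)
          = ((k : ℚ) + 1) * (stirling2 n (k + 1) : ℚ) * ff x (k + 1) * harmonic (k + 1)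
            + (stirling2 n k : ℚ) * ff x (k + 1) * harmonic k
            + (stirling2 n k : ℚ) / ((k : ℚ) + 1) * ff x (k + 1) := by
      intro k _
      have hst : (stirling2 (n + 1) (k + 1) : ℚ)
          = ((k : ℚ) + 1) * stirling2 n (k + 1) + stirling2 n k := by
        show (((k + 1) * stirling2 n (k + 1) + stirling2 n k : ℕ) : ℚ) = _
        push_cast; ring
      have hh : harmonic (k + 1) = harmonic k + ((k : ℚ) + 1)⁻¹ := by
        rw [harmonic_succ]; push_cast; ring
      have hk : ((k : ℚ) + 1) ≠ 0 := by positivity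
      rw [hst, hh]
      field_simp
      ring
    have hA : ∑ k ∈ range (n + 1),
          ((k : ℚ) + 1) * (stirling2 n (k + 1) : ℚ) * ff x (k + 1) * harmonic (k + 1)
        = ∑ k ∈ range (n + 1), (k : ℚ) * (stirling2 n k : ℚ) * ff x k * harmonic k := by
      have e1 := sum_range_succ'
        (fun k => (k : ℚ) * (stirling2 n k : ℚ) * ff x k * harmonic k) (n + 1)
      have e2 := sum_range_succ
        (fun k => (k : ℚ) * (stirling2 n k : ℚ) * ff x k * harmonic k) (n + 1)
      simp only [Nat.cast_zero, zero_mul, add_zero, stirling2_of_lt n (n + 1) (by omega),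
        Nat.cast_zero, mul_zero, zero_mul] at e1 e2
      rw [e2] at e1
      calc ∑ k ∈ range (n + 1),
            ((k : ℚ) + 1) * (stirling2 n (k + 1) : ℚ) * ff x (k + 1) * harmonic (k + 1)
          = ∑ k ∈ range (n + 1),
            (((k + 1 : ℕ)) : ℚ) * (stirling2 n (k + 1) : ℚ) * ff x (k + 1) * harmonic (k + 1) :=
            sum_congr rfl fun k _ => by push_cast; ring
        _ = _ := e1.symm
    have hS : ∑ k ∈ range (n + 2), (stirling2 (n + 1) k : ℚ) * ff x k * harmonic k
        = x * (∑ k ∈ range (n + 1), (stirling2 n k : ℚ) * ff x k * harmonic k)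
          + ∑ k ∈ range (n + 1), (stirling2 n k : ℚ) / ((k : ℚ) + 1) * ff x (k + 1) := by
      rw [sum_range_succ', peel0, add_zero, sum_congr rfl expand, sum_add_distrib,
        sum_add_distrib, hA]
      congr 1
      rw [mul_sum, ← sum_add_distrib]
      exact sum_congr rfl fun k _ => by rw [ff_succ]; ring
    -- LHS recurrence
    have hL0 : ∑ j ∈ range (n + 2),
          (((n + 1).choose j : ℚ) - 1) * (_root_.bernoulli j / (j : ℚ)) * x ^ (n + 1 - j)
        = ∑ j ∈ range (n + 1),
          (((n + 1).choose (j + 1) : ℚ) - 1) * (_root_.bernoulli (j + 1) / ((j : ℚ) + 1))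
            * x ^ (n - j) := by
      rw [sum_range_succ']
      norm_num
      exact sum_congr rfl fun j _ => by push_cast [Nat.succ_sub_succ]; ring
    have hsplit : ∀ j ∈ range (n + 1),
        (((n + 1).choose (j + 1) : ℚ) - 1) * (_root_.bernoulli (j + 1) / ((j : ℚ) + 1))
            * x ^ (n - j)
          = ((n.choose (j + 1) : ℚ) - 1) * (_root_.bernoulli (j + 1) / ((j : ℚ) + 1)) * x ^ (n - j)
            + (n.choose j : ℚ) * (_root_.bernoulli (j + 1) / ((j : ℚ) + 1)) * x ^ (n - j) := by
      intro j _
      have hcc : (((n + 1).choose (j + 1)) : ℚ) = (n.choose j : ℚ) + (n.choose (j + 1) : ℚ) := by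
        rw [Nat.choose_succ_succ]; push_cast; ring
      rw [hcc]; ring
    have hX : x * ∑ j ∈ range (n + 1),
          ((n.choose j : ℚ) - 1) * (_root_.bernoulli j / (j : ℚ)) * x ^ (n - j)
        = ∑ j ∈ range n,
          ((n.choose (j + 1) : ℚ) - 1) * (_root_.bernoulli (j + 1) / ((j : ℚ) + 1))
            * x ^ (n - j) := by
      rw [sum_range_succ']
      norm_num
      rw [mul_sum]
      refine sum_congr rfl fun j hj => ?_
      have he : n - (j + 1) + 1 = n - j := by
        have := mem_range.mp hj; omega
      rw [← he, pow_succ]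
      ring
    have hsum1 : ∑ j ∈ range (n + 1),
          ((n.choose (j + 1) : ℚ) - 1) * (_root_.bernoulli (j + 1) / ((j : ℚ) + 1)) * x ^ (n - j)
        = (∑ j ∈ range n,
            ((n.choose (j + 1) : ℚ) - 1) * (_root_.bernoulli (j + 1) / ((j : ℚ) + 1))
              * x ^ (n - j))
          + (- (_root_.bernoulli (n + 1) / ((n : ℚ) + 1))) := by
      rw [sum_range_succ]
      congr 1
      rw [Nat.choose_succ_self]
      norm_num
    have hsum2 : ∑ j ∈ range (n + 1),
          (n.choose j : ℚ) * (_root_.bernoulli (j + 1) / ((j : ℚ) + 1)) * x ^ (n - j)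
        = (∑ j ∈ range n,
            _root_.bernoulli (j + 1) * (((n + 1).choose (j + 1)) : ℚ) * x ^ (n - j)
              / ((n : ℚ) + 1))
          + _root_.bernoulli (n + 1) / ((n : ℚ) + 1) := by
      have step : ∀ j ∈ range (n + 1),
          (n.choose j : ℚ) * (_root_.bernoulli (j + 1) / ((j : ℚ) + 1)) * x ^ (n - j)
            = _root_.bernoulli (j + 1) * (((n + 1).choose (j + 1)) : ℚ) * x ^ (n - j)
              / ((n : ℚ) + 1) := by
        intro j _
        have hid : ((n : ℚ) + 1) * (n.choose j : ℚ) = (((n + 1).choose (j + 1)) : ℚ) * ((j : ℚ) + 1) := by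
          have h0 := congrArg (fun m : ℕ => (m : ℚ)) (Nat.add_one_mul_choose_eq n j)
          push_cast at h0
          linear_combination h0
        have hj : ((j : ℚ) + 1) ≠ 0 := by positivity
        have hn1 : ((n : ℚ) + 1) ≠ 0 := by positivity
        field_simp
        linear_combination (_root_.bernoulli (j + 1) * x ^ (n - j)) * hid
      rw [sum_congr rfl step, sum_range_succ]
      norm_num
    have hT : ∑ i ∈ range (n + 1),
          _root_.bernoulli i * (((n + 1).choose i) : ℚ) * x ^ (n + 1 - i) / ((n : ℚ) + 1)
        = (∑ j ∈ range n,
            _root_.bernoulli (j + 1) * (((n + 1).choose (j + 1)) : ℚ) * x ^ (n - j)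
              / ((n : ℚ) + 1))
          + x ^ (n + 1) / ((n : ℚ) + 1) := by
      rw [sum_range_succ']
      norm_num
      exact sum_congr rfl fun j _ => by rw [Nat.succ_sub_succ]
    have hkey : ∑ k ∈ range (n + 1), (stirling2 n k : ℚ) / ((k : ℚ) + 1) * ff x (k + 1)
        = ∑ i ∈ range (n + 1),
            _root_.bernoulli i * (((n + 1).choose i) : ℚ) * x ^ (n + 1 - i) / ((n : ℚ) + 1) := by
      rw [key]
    -- assemble
    rw [hL0, sum_congr rfl hsplit, sum_add_distrib, hsum1, hsum2, ← hX, ih, hS, hkey, hT,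
      harmonic_succ]
    push_cast
    ring

theorem bernoulli_genChoose_identity (n : ℕ) (hn : 1 ≤ n) (x : ℚ) :
    ∑ j ∈ Finset.Icc 1 n, ((n.choose j : ℚ) - 1) * (bernoulli j / (j : ℚ)) * x ^ (n - j)
      = ∑ k ∈ Finset.Icc 1 n,
          (stirling2 n k : ℚ) * genChoose x k * (k.factorial : ℚ) * harmonic k
        - harmonic n * x ^ n := by
  have hins : range (n + 1) = insert 0 (Finset.Icc 1 n) := by
    ext j
    simp only [mem_range, mem_insert, mem_Icc]
    omega
  have h1 : ∑ j ∈ Finset.Icc 1 n, ((n.choose j : ℚ) - 1) * (bernoulli j / (j : ℚ)) * x ^ (n - j)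
      = ∑ j ∈ range (n + 1), ((n.choose j : ℚ) - 1) * (bernoulli j / (j : ℚ)) * x ^ (n - j) := by
    rw [hins, sum_insert (by simp)]
    norm_num
  have h2 : ∑ k ∈ Finset.Icc 1 n,
        (stirling2 n k : ℚ) * genChoose x k * (k.factorial : ℚ) * harmonic k
      = ∑ k ∈ range (n + 1), (stirling2 n k : ℚ) * ff x k * harmonic k := by
    rw [hins, sum_insert (by simp)]
    have h0 : (stirling2 n 0 : ℚ) * ff x 0 * harmonic 0 = 0 := by
      simp [harmonic]
    rw [h0, zero_add]
    refine sum_congr rfl fun k _ => ?_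
    rw [mul_assoc ((stirling2 n k : ℚ)) (genChoose x k), genChoose_mul_fact]
  rw [h1, h2, main_aux x n hn]
end

section
/- For all positive integers n and m, ∑_{k=1}^{n} {n k} · C(m,k) · k! · H_k = H_m · m^n − ∑_{j=1}^{m} (m-j)^n / j. -/
open Finset Polynomial

theorem stirling2_eq_stirlingSecond : stirling2 = Nat.stirlingSecond := by
  funext n k
  induction n generalizing k with
  | zero => cases k <;> rfl
  | succ n ih => cases k <;> simp [stirling2, Nat.stirlingSecond_succ_succ, ih]

section Stirling

variable (R : Type*) [CommRing R]

theorem X_mul_descPochhammer (k : ℕ) :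
    X * descPochhammer R k = descPochhammer R (k + 1) + (k : R[X]) * descPochhammer R k := by
  rw [descPochhammer_succ_right]
  ring

theorem sum_stirlingSecond_mul_descPochhammer (n : ℕ) :
    ∑ k ∈ range (n + 1), (n.stirlingSecond k : R[X]) * descPochhammer R k = X ^ n := by
  induction n with
  | zero => simp
  | succ n ih =>
    have hshift := sum_range_succ' (fun k => (k * n.stirlingSecond k : R[X]) * descPochhammer R k)
      (n + 1)
    rw [sum_range_succ, Nat.stirlingSecond_eq_zero_of_lt n.lt_succ_self] at hshift
    simp only [Nat.cast_zero, mul_zero, zero_mul, add_zero, Nat.cast_succ] at hshift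
    rw [sum_range_succ', Nat.stirlingSecond_succ_zero, Nat.cast_zero, zero_mul, add_zero]
    calc ∑ k ∈ range (n + 1), ((n + 1).stirlingSecond (k + 1) : R[X]) * descPochhammer R (k + 1)
        = ∑ k ∈ range (n + 1), (((k + 1) * n.stirlingSecond (k + 1) : R[X]) *
            descPochhammer R (k + 1) + n.stirlingSecond k * descPochhammer R (k + 1)) :=
          sum_congr rfl fun k _ => by rw [Nat.stirlingSecond_succ_succ]; push_cast; ring
      _ = ∑ k ∈ range (n + 1), ((k * n.stirlingSecond k : R[X]) * descPochhammer R k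
            + n.stirlingSecond k * descPochhammer R (k + 1)) := by
          rw [sum_add_distrib, ← hshift, sum_add_distrib]
      _ = X * ∑ k ∈ range (n + 1), (n.stirlingSecond k : R[X]) * descPochhammer R k := by
          rw [mul_sum]
          exact sum_congr rfl fun k _ => by rw [mul_left_comm, X_mul_descPochhammer]; ring
      _ = X ^ (n + 1) := by rw [ih, pow_succ']

theorem cast_pow_eq_sum_stirlingSecond_mul_factorial_mul_choose (n x : ℕ) :
    (x : R) ^ n = ∑ k ∈ range (n + 1), (n.stirlingSecond k * k.factorial * x.choose k : R) := by
  have h := congrArg (eval (x : R)) (sum_stirlingSecond_mul_descPochhammer R n)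
  simp only [eval_finsetSum, eval_mul, eval_natCast, descPochhammer_eval_eq_descFactorial,
    Nat.descFactorial_eq_factorial_mul_choose, eval_pow, eval_X] at h
  rw [← h]
  push_cast
  simp only [mul_assoc]

end Stirling

theorem cast_choose_succ_div (m k : ℕ) :
    ((m + 1).choose (k + 1) : ℚ) / (m + 1) = m.choose k / (k + 1) := by
  rw [div_eq_div_iff (by positivity) (by positivity), mul_comm (m.choose k : ℚ)]
  exact_mod_cast (Nat.add_one_mul_choose_eq m k).symm

theorem sum_choose_sub_div_eq_choose_mul_harmonic_sub (m k : ℕ) :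
    ∑ j ∈ Icc 1 m, ((m - j).choose k : ℚ) / j = m.choose k * (harmonic m - harmonic k) := by
  induction m generalizing k with
  | zero => cases k <;> simp
  | succ m ih =>
    cases k with
    | zero =>
      rw [harmonic_zero, sub_zero, Nat.choose_zero_right, Nat.cast_one, one_mul, harmonic_eq_sum_Icc]
      simp only [Nat.choose_zero_right, Nat.cast_one, one_div]
    | succ k =>
      have hpascal : ∀ j ∈ Icc 1 m, ((m + 1 - j).choose (k + 1) : ℚ) / j
          = ((m - j).choose (k + 1) : ℚ) / j + ((m - j).choose k : ℚ) / j := by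
        intro j hj
        rw [Nat.sub_add_comm (mem_Icc.1 hj).2, Nat.choose_succ_succ', Nat.cast_add, add_div,
          add_comm]
      have habsorb := cast_choose_succ_div m k
      rw [sum_Icc_succ_top (Nat.le_add_left 1 m), Nat.sub_self, Nat.choose_zero_succ,
        sum_congr rfl hpascal, sum_add_distrib, ih, ih, harmonic_succ, harmonic_succ]
      rw [Nat.choose_succ_succ'] at habsorb ⊢
      push_cast at habsorb ⊢
      linear_combination -habsorb

theorem stirling_binom_harmonic_sum_general (n m : ℕ) :
    ∑ k ∈ Finset.Icc 1 n,
      (stirling2 n k : ℚ) * (m.choose k : ℚ) * (k.factorial : ℚ) * harmonic k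
      = harmonic m * (m : ℚ) ^ n - ∑ j ∈ Finset.Icc 1 m, ((m - j : ℕ) : ℚ) ^ n / (j : ℚ) := by
  have hpow := cast_pow_eq_sum_stirlingSecond_mul_factorial_mul_choose ℚ n
  have hsupport : Icc 1 n ⊆ range (n + 1) := fun k hk => mem_range.2 (by grind)
  rw [stirling2_eq_stirlingSecond, sum_subset hsupport fun k _ hk => by
    simp [show k = 0 by grind]]
  calc ∑ k ∈ range (n + 1), (n.stirlingSecond k : ℚ) * m.choose k * k.factorial * harmonic k
      = ∑ k ∈ range (n + 1), (n.stirlingSecond k : ℚ) * k.factorial *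
          (m.choose k * harmonic m - ∑ j ∈ Icc 1 m, ((m - j).choose k : ℚ) / j) := by
        refine sum_congr rfl fun k _ => ?_
        rw [sum_choose_sub_div_eq_choose_mul_harmonic_sub]
        ring
    _ = harmonic m * (m : ℚ) ^ n - ∑ j ∈ Icc 1 m, ((m - j : ℕ) : ℚ) ^ n / (j : ℚ) := by
        simp only [mul_sub, sum_sub_distrib, hpow, sum_div, mul_sum]
        rw [sum_comm (s := Icc 1 m)]
        congr 1
        · exact sum_congr rfl fun k _ => by ring
        · exact sum_congr rfl fun k _ => sum_congr rfl fun j _ => by ring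

theorem stirling_binom_harmonic_sum (n m : ℕ) (hn : 1 ≤ n) (hm : 1 ≤ m) :
    ∑ k ∈ Finset.Icc 1 n,
      (stirling2 n k : ℚ) * (m.choose k : ℚ) * (k.factorial : ℚ) * harmonic k
      = harmonic m * (m : ℚ) ^ n - ∑ j ∈ Finset.Icc 1 m, ((m - j : ℕ) : ℚ) ^ n / (j : ℚ) :=
  stirling_binom_harmonic_sum_general n m
end
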